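/- arXiv:1911.01354 — 2 statements merged into one kernel-verified Lean document; each statement's English description precedes it below -/
import Mathlib

section
/- Let G be the group generated by the n-qubit Pauli operators {X_{B_i}X_{R_i}, X_{L_i}X_{L_{i+1}}, Z_{B_i}Z_{L_i}, Z_{R_i}Z_{R_{i+1}} : 1 ≤ i ≤ 2k} on 6k qubits labeled {B_i, L_i, R_i : 1 ≤ i ≤ 2k} (indices mod 2k). Then for every i, the operators X̄_i = X_{B_i}X_{L_i} and Z̄_i = Z_{B_i}Z_{R_i} commute with every generator of G, and X̄_i anticommutes with Z̄_j if and only if i = j. -/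
/-- The `6k` qubits of the code: `B_i = (0, i)`, `L_i = (1, i)`, `R_i = (2, i)`
for `1 ≤ i ≤ 2k`. -/
abbrev Qb (k : ℕ) := Fin 3 × Fin (2 * k)

/-- Pauli operators on the `6k` qubits, represented symplectically (modulo
phases) as a pair of `𝔽₂` vectors: the X-part and the Z-part. -/
abbrev PauliVec (k : ℕ) := (Qb k → ZMod 2) × (Qb k → ZMod 2)

/-- The symplectic form: two Pauli operators commute iff it vanishes and
anticommute iff it equals `1`. -/
def omega {k : ℕ} (P Q : PauliVec k) : ZMod 2 :=
  ∑ q : Qb k, (P.1 q * Q.2 q + P.2 q * Q.1 q)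

/-- The X-type Pauli operator supported on the set `S` of qubits. -/
def xOp {k : ℕ} (S : Finset (Qb k)) : PauliVec k :=
  (fun q => if q ∈ S then 1 else 0, 0)

/-- The Z-type Pauli operator supported on the set `S` of qubits. -/
def zOp {k : ℕ} (S : Finset (Qb k)) : PauliVec k :=
  (0, fun q => if q ∈ S then 1 else 0)

/-- The qubit label `B_i`. -/
def B {k : ℕ} (i : Fin (2 * k)) : Qb k := (0, i)
/-- The qubit label `L_i`. -/
def L {k : ℕ} (i : Fin (2 * k)) : Qb k := (1, i)
/-- The qubit label `R_i`. -/
def R {k : ℕ} (i : Fin (2 * k)) : Qb k := (2, i)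

/-- Cyclic successor of the index `i` (indices mod `2k`). -/
def qsucc {k : ℕ} (i : Fin (2 * k)) : Fin (2 * k) :=
  ⟨(i.val + 1) % (2 * k), Nat.mod_lt _ i.pos⟩

/-- Gauge generator `X_{B_i} X_{R_i}`. -/
def g₁ {k : ℕ} (i : Fin (2 * k)) : PauliVec k := xOp {B i, R i}
/-- Gauge generator `X_{L_i} X_{L_{i+1}}`. -/
def g₂ {k : ℕ} (i : Fin (2 * k)) : PauliVec k := xOp {L i, L (qsucc i)}
/-- Gauge generator `Z_{B_i} Z_{L_i}`. -/
def g₃ {k : ℕ} (i : Fin (2 * k)) : PauliVec k := zOp {B i, L i}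
/-- Gauge generator `Z_{R_i} Z_{R_{i+1}}`. -/
def g₄ {k : ℕ} (i : Fin (2 * k)) : PauliVec k := zOp {R i, R (qsucc i)}

/-- Bare-logical operator `X̄_i = X_{B_i} X_{L_i}`. -/
def Xbar {k : ℕ} (i : Fin (2 * k)) : PauliVec k := xOp {B i, L i}
/-- Bare-logical operator `Z̄_i = Z_{B_i} Z_{R_i}`. -/
def Zbar {k : ℕ} (i : Fin (2 * k)) : PauliVec k := zOp {B i, R i}


lemma omega_xx {k : ℕ} (S T : Finset (Qb k)) : omega (xOp S) (xOp T) = 0 := by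
  simp [omega, xOp]

lemma omega_zz {k : ℕ} (S T : Finset (Qb k)) : omega (zOp S) (zOp T) = 0 := by
  simp [omega, zOp]

lemma omega_xz {k : ℕ} (S T : Finset (Qb k)) :
    omega (xOp S) (zOp T) = ((S ∩ T).card : ZMod 2) := by
  simp only [omega, xOp, zOp, Pi.zero_apply, mul_zero, zero_mul, add_zero]
  have : ∀ q : Qb k, (if q ∈ S then (1 : ZMod 2) else 0) * (if q ∈ T then 1 else 0)
      = if q ∈ S ∩ T then 1 else 0 := by
    intro q
    by_cases hS : q ∈ S <;> by_cases hT : q ∈ T <;> simp [hS, hT, Finset.mem_inter]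
  rw [Finset.sum_congr rfl fun q _ => this q]
  rw [Finset.sum_ite_mem, Finset.univ_inter, Finset.sum_const, nsmul_eq_mul, mul_one]

lemma omega_zx {k : ℕ} (S T : Finset (Qb k)) :
    omega (zOp S) (xOp T) = ((S ∩ T).card : ZMod 2) := by
  rw [← omega_xz]
  simp only [omega, xOp, zOp, Pi.zero_apply, mul_zero, zero_mul, add_zero, zero_add]

lemma inter_same {k : ℕ} (a : Fin 3) (i j : Fin (2 * k)) (b : Fin 3) (hab : a ≠ b) :
    (({(a, i), (b, i)} : Finset (Qb k)) ∩ {(a, j), (b, j)}).card % 2 = 0 := by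
  by_cases h : i = j
  · subst h
    rw [Finset.inter_self, Finset.card_insert_of_notMem, Finset.card_singleton]
    simp [Prod.ext_iff, hab]
  · have : (({(a, i), (b, i)} : Finset (Qb k)) ∩ {(a, j), (b, j)}) = ∅ := by
      ext q
      simp only [Finset.mem_inter, Finset.mem_insert, Finset.mem_singleton,
        Finset.notMem_empty, iff_false, not_and]
      rintro (rfl | rfl) <;> simp [Prod.ext_iff, h, hab, hab.symm]
    simp [this]

/-- For the gauge group of the `[[6k,2k,2]]` code, the operators
`X̄_i = X_{B_i}X_{L_i}` and `Z̄_i = Z_{B_i}Z_{R_i}` commute with every gauge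
generator, and `X̄_i` anticommutes with `Z̄_j` iff `i = j`. -/
theorem bare_logical_operators_of_code
    (k : ℕ) (hk : 1 ≤ k) :
    (∀ i j : Fin (2 * k),
      omega (Xbar i) (g₁ j) = 0 ∧ omega (Xbar i) (g₂ j) = 0 ∧
      omega (Xbar i) (g₃ j) = 0 ∧ omega (Xbar i) (g₄ j) = 0 ∧
      omega (Zbar i) (g₁ j) = 0 ∧ omega (Zbar i) (g₂ j) = 0 ∧
      omega (Zbar i) (g₃ j) = 0 ∧ omega (Zbar i) (g₄ j) = 0) ∧
    (∀ i j : Fin (2 * k), omega (Xbar i) (Zbar j) = 1 ↔ i = j) := by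
  have key : ∀ n : ℕ, n % 2 = 0 → (n : ZMod 2) = 0 := by
    intro n h
    obtain ⟨m, rfl⟩ := Nat.dvd_of_mod_eq_zero h
    push_cast
    exact mul_eq_zero_of_left (by decide) _
  have empt : ∀ (a b c d : Fin 3) (i i' j j' : Fin (2 * k)), a ≠ c → a ≠ d → b ≠ c → b ≠ d →
      (({(a, i), (b, i')} : Finset (Qb k)) ∩ {(c, j), (d, j')}) = ∅ := by
    intro a b c d i i' j j' h1 h2 h3 h4
    ext q
    simp only [Finset.mem_inter, Finset.mem_insert, Finset.mem_singleton,
      Finset.notMem_empty, iff_false, not_and]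
    rintro (rfl | rfl) <;> simp [Prod.ext_iff, h1, h2, h3, h4]
  constructor
  · intro i j
    refine ⟨?_, ?_, ?_, ?_, ?_, ?_, ?_, ?_⟩
    · exact omega_xx _ _
    · exact omega_xx _ _
    · rw [Xbar, g₃, omega_xz]
      exact key _ (inter_same 0 i j 1 (by decide))
    · rw [Xbar, g₄, omega_xz]
      simp only [B, L, R]
      rw [empt 0 1 2 2 i i j (qsucc j) (by decide) (by decide) (by decide) (by decide)]
      simp
    · rw [Zbar, g₁, omega_zx]
      exact key _ (inter_same 0 i j 2 (by decide))
    · rw [Zbar, g₂, omega_zx]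
      simp only [B, L, R]
      rw [empt 0 2 1 1 i i j (qsucc j) (by decide) (by decide) (by decide) (by decide)]
      simp
    · exact omega_zz _ _
    · exact omega_zz _ _
  · intro i j
    rw [Xbar, Zbar, omega_xz]
    by_cases h : i = j
    · subst h
      have : (({B i, L i} : Finset (Qb k)) ∩ {B i, R i}) = {B i} := by
        ext q
        simp only [Finset.mem_inter, Finset.mem_insert, Finset.mem_singleton]
        constructor
        · rintro ⟨(rfl | rfl), (h | h)⟩ <;> first | rfl | (exfalso; simp [B, L, R, Prod.ext_iff] at h) | (simp [B, L, R, Prod.ext_iff] at h; exact absurd h (by decide))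
        · rintro rfl
          simp
      simp [this]
    · have : (({B i, L i} : Finset (Qb k)) ∩ {B j, R j}) = ∅ := by
        ext q
        simp only [Finset.mem_inter, Finset.mem_insert, Finset.mem_singleton,
          Finset.notMem_empty, iff_false, not_and]
        rintro (rfl | rfl) <;> simp [B, L, R, Prod.ext_iff, h]
      simp [this, h]
end

section
/- Every nontrivial Pauli operator that commutes with all elements of the gauge group G of the paper's [[6k,2k,2]] code (G generated by {X_{B_i}X_{R_i}, X_{L_i}X_{L_{i+1}}, Z_{B_i}Z_{L_i}, Z_{R_i}Z_{R_{i+1}}}) has weight at least 2; equivalently, no single-qubit Pauli operator X_q, Y_q, or Z_q commutes with all generators of G. -/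

lemma omega_xOp {k : ℕ} (P : PauliVec k) (S : Finset (Qb k)) :
    omega P (xOp S) = ∑ q ∈ S, P.2 q := by
  unfold omega xOp
  simp [mul_ite, Finset.sum_ite_mem]

lemma omega_zOp {k : ℕ} (P : PauliVec k) (S : Finset (Qb k)) :
    omega P (zOp S) = ∑ q ∈ S, P.1 q := by
  unfold omega zOp
  simp [mul_ite, Finset.sum_ite_mem]

lemma zmod2_ne {x y : ZMod 2} (h : x + y = 0) (hx : x ≠ 0) : y ≠ 0 := by
  intro hy; subst hy; simp at h; exact hx h

lemma qsucc_ne {k : ℕ} (i : Fin (2 * k)) : qsucc i ≠ i := by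
  intro h
  have hv := congrArg Fin.val h
  simp only [qsucc] at hv
  have hlt := i.isLt
  rcases Nat.lt_or_ge (i.val + 1) (2 * k) with h1 | h1
  · rw [Nat.mod_eq_of_lt h1] at hv; omega
  · have he : i.val + 1 = 2 * k := by omega
    rw [he, Nat.mod_self] at hv
    omega

lemma two_le_card {k : ℕ} (P : PauliVec k) (q q' : Qb k) (hne : q ≠ q')
    (hq : P.1 q ≠ 0 ∨ P.2 q ≠ 0) (hq' : P.1 q' ≠ 0 ∨ P.2 q' ≠ 0) :
    2 ≤ (Finset.univ.filter fun q : Qb k => P.1 q ≠ 0 ∨ P.2 q ≠ 0).card := by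
  have hsub : ({q, q'} : Finset (Qb k)) ⊆
      Finset.univ.filter fun q : Qb k => P.1 q ≠ 0 ∨ P.2 q ≠ 0 := by
    intro x hx
    simp only [Finset.mem_insert, Finset.mem_singleton] at hx
    simp only [Finset.mem_filter, Finset.mem_univ, true_and]
    rcases hx with rfl | rfl
    · exact hq
    · exact hq'
  calc 2 = ({q, q'} : Finset (Qb k)).card := (Finset.card_pair hne).symm
    _ ≤ _ := Finset.card_le_card hsub

/-- Distance-two property of the `[[6k,2k,2]]` code: every nontrivial Pauli
operator commuting with all the gauge generators (equivalently, with every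
element of the gauge group they generate) has weight at least `2`; in
particular no single-qubit Pauli commutes with all generators. -/
theorem code_detects_single_qubit_errors
    (k : ℕ) (hk : 1 ≤ k) (P : PauliVec k) (hP : P ≠ 0)
    (hcomm : ∀ i : Fin (2 * k),
      omega P (g₁ i) = 0 ∧ omega P (g₂ i) = 0 ∧
      omega P (g₃ i) = 0 ∧ omega P (g₄ i) = 0) :
    2 ≤ (Finset.univ.filter fun q : Qb k => P.1 q ≠ 0 ∨ P.2 q ≠ 0).card := by

  -- find a qubit in the support
  have hex : ∃ q : Qb k, P.1 q ≠ 0 ∨ P.2 q ≠ 0 := by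
    by_contra h
    push_neg at h
    apply hP
    have h1 : P.1 = 0 := funext fun q => (h q).1
    have h2 : P.2 = 0 := funext fun q => (h q).2
    exact Prod.ext h1 h2
  obtain ⟨⟨t, i⟩, hq⟩ := hex
  have hc1 : P.2 (B i) + P.2 (R i) = 0 := by
    have := (hcomm i).1
    rwa [g₁, omega_xOp, Finset.sum_pair (by simp [B, R, Prod.ext_iff])] at this
  have hc2 : P.2 (L i) + P.2 (L (qsucc i)) = 0 := by
    have := (hcomm i).2.1
    rwa [g₂, omega_xOp, Finset.sum_pair
      (by simp [L, Prod.ext_iff]; exact fun h => (qsucc_ne i) h.symm)] at this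
  have hc3 : P.1 (B i) + P.1 (L i) = 0 := by
    have := (hcomm i).2.2.1
    rwa [g₃, omega_zOp, Finset.sum_pair (by simp [B, L, Prod.ext_iff])] at this
  have hc4 : P.1 (R i) + P.1 (R (qsucc i)) = 0 := by
    have := (hcomm i).2.2.2
    rwa [g₄, omega_zOp, Finset.sum_pair
      (by simp [R, Prod.ext_iff]; exact fun h => (qsucc_ne i) h.symm)] at this
  fin_cases t
  · -- q = B i
    rcases hq with hq | hq
    · exact two_le_card P (B i) (L i) (by simp [B, L, Prod.ext_iff])
        (Or.inl hq) (Or.inl (zmod2_ne hc3 hq))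
    · exact two_le_card P (B i) (R i) (by simp [B, R, Prod.ext_iff])
        (Or.inr hq) (Or.inr (zmod2_ne hc1 hq))
  · -- q = L i
    rcases hq with hq | hq
    · exact two_le_card P (L i) (B i) (by simp [B, L, Prod.ext_iff])
        (Or.inl hq) (Or.inl (zmod2_ne (by rwa [add_comm] at hc3) hq))
    · exact two_le_card P (L i) (L (qsucc i))
        (by simp [L, Prod.ext_iff]; exact fun h => (qsucc_ne i) h.symm)
        (Or.inr hq) (Or.inr (zmod2_ne hc2 hq))
  · -- q = R i
    rcases hq with hq | hq
    · exact two_le_card P (R i) (R (qsucc i))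
        (by simp [R, Prod.ext_iff]; exact fun h => (qsucc_ne i) h.symm)
        (Or.inl hq) (Or.inl (zmod2_ne hc4 hq))
    · exact two_le_card P (R i) (B i) (by simp [B, R, Prod.ext_iff])
        (Or.inr hq) (Or.inr (zmod2_ne (by rwa [add_comm] at hc1) hq))
end
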